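/- arXiv:1007.3890 — 2 statements merged into one kernel-verified Lean document; each statement's English description precedes it below -/
import Mathlib

section
/- Let Ω ⊂ ℝⁿ be a convex domain and let u : Ω → ℝ be C² with D²u ≥ 2ε₀·I for some ε₀ > 0. Let φ : Ω × ℝⁿ → ℝ be C² with ‖D²φ‖ < ε₀ (so the cost c(x,y) = −x·y + φ(x,y) differs from the bilinear cost by less than ε₀ in C²). Suppose c_{y₀}(x) = −x·y₀ + φ(x,y₀) is a supporting function of u near x₀ (touching u from below locally at x₀) and that c_{y₀}(x₁) = u(x₁) at another point x₁ ≠ x₀ with Dc_{y₀}(x₀) = Du(x₀). Then a contradiction follows; hence u is c-convex. -/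
open RealInnerProductSpace

/-! The gap `u - c_{y₀}` has Hessian at least `2ε₀ - ε₀ = ε₀` times the identity on `Ω`, so it is
strictly convex there. It vanishes at `x₀` and `x₁` and, since `c_{y₀}` supports `u`, is
nonnegative at their midpoint, which strict convexity forbids. -/

section

variable {𝕜 E F : Type*} [NontriviallyNormedField 𝕜] [NormedAddCommGroup E] [NormedSpace 𝕜 E]
  [NormedAddCommGroup F] [NormedSpace 𝕜 F]

theorem ContinuousLinearMap.iteratedFDeriv_add_two (L : E →L[𝕜] F) (n : ℕ) :
    iteratedFDeriv 𝕜 (n + 2) L = 0 := by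
  ext x : 1
  rw [iteratedFDeriv_succ_eq_comp_right]
  simp only [ContinuousLinearMap.fderiv, iteratedFDeriv_succ_const, Pi.zero_apply]
  exact (continuousMultilinearCurryRightEquiv' 𝕜 (n + 1) E F).symm.map_zero

theorem iteratedFDeriv_continuousLinearMap_add (L : E →L[𝕜] F) {f : E → F} {n : ℕ}
    (hf : ContDiff 𝕜 (n + 2) f) :
    iteratedFDeriv 𝕜 (n + 2) (fun x => L x + f x) = iteratedFDeriv 𝕜 (n + 2) f := by
  ext1 x
  rw [fun_iteratedFDeriv_add_apply L.contDiff.contDiffAt hf.contDiffAt, L.iteratedFDeriv_add_two,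
    Pi.zero_apply, zero_add]

theorem iteratedDeriv_comp_add_smul {f : E → F} {n : WithTop ℕ∞} (hf : ContDiff 𝕜 n f) {k : ℕ}
    (hk : k ≤ n) (x v : E) (t : 𝕜) :
    iteratedDeriv k (fun s => f (x + s • v)) t = iteratedFDeriv 𝕜 k f (x + t • v) fun _ => v := by
  have hcomp : (fun s => f (x + s • v)) =
      (fun z => f (x + z)) ∘ (ContinuousLinearMap.id 𝕜 𝕜).smulRight v := by
    funext s; simp
  have hshift : ContDiff 𝕜 n fun z => f (x + z) := hf.comp (contDiff_const.add contDiff_id)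
  rw [iteratedDeriv_eq_iteratedFDeriv, hcomp,
    ContinuousLinearMap.iteratedFDeriv_comp_right _ hshift _ hk]
  simp [iteratedFDeriv_comp_add_left]

end

theorem strictConvexOn_of_iteratedFDeriv_two_pos {E : Type*} [NormedAddCommGroup E]
    [NormedSpace ℝ E] {s : Set E} (hs : Convex ℝ s) {f : E → ℝ} (hf : ContDiff ℝ 2 f)
    (hf₂ : ∀ x ∈ s, ∀ v ≠ 0, 0 < iteratedFDeriv ℝ 2 f x ![v, v]) : StrictConvexOn ℝ s f := by
  refine ⟨hs, fun x hx y hy hxy a b ha hb hab => ?_⟩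
  have hline : StrictConvexOn ℝ (Set.Icc 0 1) fun t : ℝ => f (x + t • (y - x)) := by
    refine strictConvexOn_of_deriv2_pos (convex_Icc 0 1)
      (hf.continuous.comp (by fun_prop)).continuousOn fun t ht => ?_
    rw [interior_Icc] at ht
    rw [← iteratedDeriv_eq_iterate, iteratedDeriv_comp_add_smul hf le_rfl]
    convert hf₂ _ (hs.add_smul_sub_mem hx hy (Set.Ioo_subset_Icc_self ht)) (y - x)
      (sub_ne_zero.2 hxy.symm) using 2
    ext i; fin_cases i <;> rfl
  have key := hline.2 (Set.left_mem_Icc.2 zero_le_one) (Set.right_mem_Icc.2 zero_le_one)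
    zero_ne_one ha hb hab
  obtain rfl : a = 1 - b := by linarith
  have hpt : (1 - b) • x + b • y = x + ((1 - b) • (0 : ℝ) + b • 1) • (y - x) := by
    simp only [smul_eq_mul, mul_zero, mul_one, zero_add]; module
  simpa [hpt] using key

theorem c_convexity_contradiction_general {n : ℕ} (ε₀ : ℝ) (hε₀ : 0 < ε₀)
    (Ω : Set (EuclideanSpace ℝ (Fin n))) (hΩ : Convex ℝ Ω)
    (u : EuclideanSpace ℝ (Fin n) → ℝ) (hu : ContDiff ℝ 2 u)
    (huconv : ∀ x ∈ Ω, ∀ v : EuclideanSpace ℝ (Fin n),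
      2 * ε₀ * ‖v‖ ^ 2 ≤ iteratedFDeriv ℝ 2 u x ![v, v])
    (φ : EuclideanSpace ℝ (Fin n) → EuclideanSpace ℝ (Fin n) → ℝ)
    (y₀ : EuclideanSpace ℝ (Fin n))
    (hφ : ContDiff ℝ 2 (fun x => φ x y₀))
    (hφ2 : ∀ x ∈ Ω, ∀ v : EuclideanSpace ℝ (Fin n),
      |iteratedFDeriv ℝ 2 (fun z => φ z y₀) x ![v, v]| ≤ ε₀ * ‖v‖ ^ 2)
    (g : EuclideanSpace ℝ (Fin n) → ℝ)
    (hg : g = fun x => -⟪x, y₀⟫ + φ x y₀)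
    (x₀ x₁ : EuclideanSpace ℝ (Fin n)) (hx01 : x₁ ≠ x₀)
    (hx₀ : x₀ ∈ Ω) (hx₁ : x₁ ∈ Ω)
    (hsupp : ∀ x ∈ Ω, g x ≤ u x)
    (htouch₀ : g x₀ = u x₀)
    (htouch₁ : g x₁ = u x₁) :
    False := by
  have hg_lin : g = fun x => (-innerSLFlip ℝ y₀) x + φ x y₀ := by simp [hg]
  have hg_smooth : ContDiff ℝ 2 g := hg_lin ▸ (-innerSLFlip ℝ y₀).contDiff.add hφ
  have hg_hess : iteratedFDeriv ℝ 2 g = iteratedFDeriv ℝ 2 (fun z => φ z y₀) :=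
    hg_lin ▸ iteratedFDeriv_continuousLinearMap_add (n := 0) _ hφ
  have hgap_hess : ∀ x ∈ Ω, ∀ v ≠ 0, 0 < iteratedFDeriv ℝ 2 (u - g) x ![v, v] := by
    intro x hx v hv
    rw [iteratedFDeriv_sub_apply hu.contDiffAt hg_smooth.contDiffAt, hg_hess, sub_apply]
    have hv2 : 0 < ε₀ * ‖v‖ ^ 2 := by positivity
    linarith [huconv x hx v, le_of_abs_le (hφ2 x hx v)]
  have hgap := strictConvexOn_of_iteratedFDeriv_two_pos hΩ (hu.sub hg_smooth) hgap_hess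
  have hmid := hgap.2 hx₀ hx₁ hx01.symm one_half_pos one_half_pos (add_halves 1)
  have hmid_nonneg := hsupp _ (hΩ hx₀ hx₁ one_half_pos.le one_half_pos.le (add_halves 1))
  simp only [smul_eq_mul, htouch₀, htouch₁, sub_self, mul_zero, add_zero] at hmid
  linarith

/-- c-convexity contradiction lemma: a strongly convex `u` (with `D²u ≥ 2ε₀ I`) cannot be
supported from below by the cost function `c_{y₀}(x) = -⟨x,y₀⟩ + φ(x,y₀)` (with `‖D²φ‖ < ε₀`)
touching at `x₀` with matching gradient and again at another point `x₁`. -/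
theorem c_convexity_contradiction {n : ℕ} (ε₀ : ℝ) (hε₀ : 0 < ε₀)
    (Ω : Set (EuclideanSpace ℝ (Fin n))) (hΩ : Convex ℝ Ω)
    (u : EuclideanSpace ℝ (Fin n) → ℝ) (hu : ContDiff ℝ 2 u)
    (huconv : ∀ x ∈ Ω, ∀ v : EuclideanSpace ℝ (Fin n),
      2 * ε₀ * ‖v‖ ^ 2 ≤ iteratedFDeriv ℝ 2 u x ![v, v])
    (φ : EuclideanSpace ℝ (Fin n) → EuclideanSpace ℝ (Fin n) → ℝ)
    (y₀ : EuclideanSpace ℝ (Fin n))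
    (hφ : ContDiff ℝ 2 (fun x => φ x y₀))
    (hφ2 : ∀ x ∈ Ω, ∀ v : EuclideanSpace ℝ (Fin n),
      |iteratedFDeriv ℝ 2 (fun z => φ z y₀) x ![v, v]| ≤ ε₀ * ‖v‖ ^ 2)
    (g : EuclideanSpace ℝ (Fin n) → ℝ)
    (hg : g = fun x => -⟪x, y₀⟫ + φ x y₀)
    (x₀ x₁ : EuclideanSpace ℝ (Fin n)) (hx01 : x₁ ≠ x₀)
    (hx₀ : x₀ ∈ Ω) (hx₁ : x₁ ∈ Ω)
    (hsupp : ∀ x ∈ Ω, g x ≤ u x)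
    (htouch₀ : g x₀ = u x₀)
    (hgrad₀ : fderiv ℝ g x₀ = fderiv ℝ u x₀)
    (htouch₁ : g x₁ = u x₁) :
    False :=
  c_convexity_contradiction_general ε₀ hε₀ Ω hΩ u hu huconv φ y₀ hφ hφ2 g hg x₀ x₁ hx01 hx₀ hx₁
    hsupp htouch₀ htouch₁
end

section
/- Let u : Ω → ℝ be C² on a convex domain Ω ⊂ ℝⁿ with D²u ≥ 2ε₀·I, ε₀ > 0, and let c(x,y) = −x·y + φ(x,y) with ‖φ‖_{C²} < ε₀. Define T(x) implicitly by Du(x) = D_x c(x, T(x)). Then T is injective on Ω. -/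
/-!
Fix `y = T x₀ = T x₁`. Both `x₀` and `x₁` are critical points of `g = u - c(·, y)`, whose Hessian
is `D²u - D²φ(·, y) ≥ ε₀ I` on `Ω` because the bilinear part of the cost has zero Hessian.
Along the segment from `x₀` to `x₁` the directional derivative of `g` is therefore strictly
increasing, so it cannot vanish at both ends unless `x₀ = x₁`.
-/

open RealInnerProductSpace

section

variable {E F : Type*} [NormedAddCommGroup E] [NormedSpace ℝ E]
  [NormedAddCommGroup F] [NormedSpace ℝ F]

/-- Rolle's theorem applied to `t ↦ Df(x₀ + t v) v`. -/
theorem Convex.injOn_fderiv_of_hessian_pos {s : Set E} (hs : Convex ℝ s) {f : E → ℝ}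
    (hf : ContDiff ℝ 2 f) (hpos : ∀ x ∈ s, ∀ v ≠ 0, 0 < iteratedFDeriv ℝ 2 f x ![v, v]) :
    s.InjOn (fderiv ℝ f) := by
  intro x₀ hx₀ x₁ hx₁ hDf
  by_contra hne
  set v := x₁ - x₀
  have hv : v ≠ 0 := sub_ne_zero.2 (Ne.symm hne)
  have hDf_diff : Differentiable ℝ (fderiv ℝ f) :=
    (hf.fderiv_right (by norm_num)).differentiable one_ne_zero
  have hslope : ∀ t : ℝ, HasDerivAt (fun t : ℝ => fderiv ℝ f (x₀ + t • v) v)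
      (iteratedFDeriv ℝ 2 f (x₀ + t • v) ![v, v]) t := by
    intro t
    have hline : HasDerivAt (fun t : ℝ => x₀ + t • v) v t := by
      simpa using ((hasDerivAt_id t).smul_const v).const_add x₀
    rw [iteratedFDeriv_two_apply]
    exact (ContinuousLinearMap.apply ℝ ℝ v).hasFDerivAt.comp_hasDerivAt t
      ((hDf_diff _).hasFDerivAt.comp_hasDerivAt t hline)
  have hends : fderiv ℝ f (x₀ + (0 : ℝ) • v) v = fderiv ℝ f (x₀ + (1 : ℝ) • v) v := by
    simp [v, hDf]
  obtain ⟨t, ht, hzero⟩ := exists_hasDerivAt_eq_zero zero_lt_one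
    (fun t _ => (hslope t).continuousAt.continuousWithinAt) hends (fun t _ => hslope t)
  exact (hpos _ (hs.add_smul_sub_mem hx₀ hx₁ (Set.Ioo_subset_Icc_self ht)) v hv).ne' hzero

theorem iteratedFDeriv_two_continuousLinearMap_add_apply (L : E →L[ℝ] F) {f : E → F}
    (hf : ContDiff ℝ 2 f) (x : E) :
    iteratedFDeriv ℝ 2 (fun z => L z + f z) x = iteratedFDeriv ℝ 2 f x := by
  have hL : iteratedFDeriv ℝ 2 L x = 0 := by
    have hDL : fderiv ℝ L = fun _ => L := funext fun _ => L.fderiv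
    ext m
    simp [iteratedFDeriv_two_apply, hDL]
  rw [fun_iteratedFDeriv_add_apply L.contDiff.contDiffAt hf.contDiffAt, hL, zero_add]

end

/-- Injectivity of the optimal map: if `D²u ≥ 2ε₀ I` on a convex domain and the cost
`c(x,y) = -⟨x,y⟩ + φ(x,y)` is within `ε₀` of the bilinear cost in `C²`, then the map `T`
defined by `Du(x) = D_x c(x, T(x))` is injective on `Ω`. -/
theorem transport_map_injective {n : ℕ} (ε₀ : ℝ) (hε₀ : 0 < ε₀)
    (Ω : Set (EuclideanSpace ℝ (Fin n))) (hΩ : Convex ℝ Ω)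
    (u : EuclideanSpace ℝ (Fin n) → ℝ) (hu : ContDiff ℝ 2 u)
    (huconv : ∀ x ∈ Ω, ∀ v : EuclideanSpace ℝ (Fin n),
      2 * ε₀ * ‖v‖ ^ 2 ≤ iteratedFDeriv ℝ 2 u x ![v, v])
    (φ : EuclideanSpace ℝ (Fin n) → EuclideanSpace ℝ (Fin n) → ℝ)
    (hφ : ∀ y, ContDiff ℝ 2 (fun x => φ x y))
    (hφ2 : ∀ (y : EuclideanSpace ℝ (Fin n)), ∀ x ∈ Ω, ∀ v : EuclideanSpace ℝ (Fin n),
      |iteratedFDeriv ℝ 2 (fun z => φ z y) x ![v, v]| ≤ ε₀ * ‖v‖ ^ 2)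
    (c : EuclideanSpace ℝ (Fin n) → EuclideanSpace ℝ (Fin n) → ℝ)
    (hc : c = fun x y => -⟪x, y⟫ + φ x y)
    (T : EuclideanSpace ℝ (Fin n) → EuclideanSpace ℝ (Fin n))
    (hT : ∀ x ∈ Ω, fderiv ℝ u x = fderiv ℝ (fun z => c z (T x)) x) :
    Set.InjOn T Ω := by
  intro x₀ hx₀ x₁ hx₁ hTx
  set y := T x₀
  have hcy : (fun z => c z y) = fun z => (-innerSL ℝ y) z + φ z y := by
    funext z; simp [hc, real_inner_comm]
  have hcy_smooth : ContDiff ℝ 2 (fun z => c z y) := hcy ▸ (-innerSL ℝ y).contDiff.add (hφ y)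
  have hcrit : ∀ x ∈ Ω, T x = y → fderiv ℝ (fun z => u z - c z y) x = 0 := fun x hx hTy => by
    rw [fderiv_fun_sub (hu.differentiable two_ne_zero x) (hcy_smooth.differentiable two_ne_zero x),
      hT x hx, hTy, sub_self]
  have hhess : ∀ x ∈ Ω, ∀ v ≠ 0, 0 < iteratedFDeriv ℝ 2 (fun z => u z - c z y) x ![v, v] := by
    intro x hx v hv
    rw [fun_iteratedFDeriv_sub_apply hu.contDiffAt hcy_smooth.contDiffAt, hcy,
      iteratedFDeriv_two_continuousLinearMap_add_apply _ (hφ y)]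
    have hφv := (abs_le.1 (hφ2 y x hx v)).2
    have hv2 : 0 < ε₀ * ‖v‖ ^ 2 := by positivity
    rw [sub_apply]
    linarith [huconv x hx v]
  exact hΩ.injOn_fderiv_of_hessian_pos (hu.sub hcy_smooth) hhess hx₀ hx₁
    ((hcrit x₀ hx₀ rfl).trans (hcrit x₁ hx₁ hTx.symm).symm)
end
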